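/- Let p < q be positions of w, so that the block b₀ = w[p,q) is nonempty, and let p_i := par^i(p) and q_i := par^i(q) be the i-th iterated parents. Then there exists k ∈ ℕ such that: p_j < q_j for all j ≤ k; p_j = q_j for all j > k; and the block w[p_k, q_k) is either the single-letter word [0] or the single-letter word [4]. -/

import Mathlib

/-!
Positions with a common parent `t` lie inside the image `φ(w t)`, a block of length at most 2.
Since `par` is monotone and `par x < x` for `x > 0`, the ancestors of `p < q` stay strictly ordered
up to some generation `k` and coincide from `k + 1` on. Then `p_k < q_k` share a parent `t`, so
`φ(w t)` has length 2, `w[p_k, q_k)` is its first letter, and the two-letter images `03`, `43`,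
`01` all begin with `0` or `4`.
-/

/-- The morphism φ on letters: φ(0)=03, φ(1)=43, φ(3)=1, φ(4)=01. -/
def phiLetter : ℕ → List ℕ
  | 0 => [0, 3]
  | 1 => [4, 3]
  | 3 => [1]
  | 4 => [0, 1]
  | _ => []

/-- The morphism φ on words, applied letterwise and concatenated. -/
def phi (x : List ℕ) : List ℕ := x.flatMap phiLetter

/-- The fixed point `w` of φ beginning with 0: `w n` is the `n`-th letter of
`φ^k([0])` for any `k` with `|φ^k([0])| > n` (e.g. `k = n+1`). -/
def w (n : ℕ) : ℕ := (phi^[n + 1] [0]).getD n 0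

/-- The factor `w[p, q) = (w p, …, w (q-1))`. -/
def factorW (p q : ℕ) : List ℕ := (List.range' p (q - p)).map w

/-- The Parikh map ψ, sending a word over `{0,1,3,4}` to `(|x|₀,|x|₁,|x|₃,|x|₄) ∈ ℤ⁴`. -/
def psi (x : List ℕ) : Fin 4 → ℤ :=
  ![(x.count 0 : ℤ), (x.count 1 : ℤ), (x.count 3 : ℤ), (x.count 4 : ℤ)]

/-- The incidence matrix of φ. -/
def M : Matrix (Fin 4) (Fin 4) ℤ :=
  !![1, 0, 0, 1; 0, 0, 1, 1; 1, 1, 0, 0; 0, 1, 0, 0]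

/-- `η(p) = |φ(w[0,p))|`. -/
def eta (p : ℕ) : ℕ := (phi ((List.range p).map w)).length

/-- `σ(p) = ψ(w[0,p))`, the Parikh vector of the prefix of `w` of length `p`. -/
def sigmaW (p : ℕ) : Fin 4 → ℤ := psi ((List.range p).map w)

/-- The parent of a position `x`: the unique `t` with `η(t) ≤ x < η(t+1)`. -/
def par (x : ℕ) : ℕ := Nat.findGreatest (fun t => eta t ≤ x) x

lemma Monotone.exists_iterate_lt_and_eq {α : Type*} [PartialOrder α] {f : α → α}
    (hf : Monotone f) {x y : α} (hxy : x < y) (h : ∃ n, f^[n] x = f^[n] y) :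
    ∃ k, (∀ j ≤ k, f^[j] x < f^[j] y) ∧ ∀ j, k < j → f^[j] x = f^[j] y := by
  classical
  have hm : Nat.find h ≠ 0 := fun h0 => hxy.ne (by simpa [h0] using Nat.find_spec h)
  refine ⟨Nat.find h - 1, fun j hj => ?_, fun j hj => ?_⟩
  · exact lt_of_le_of_ne (hf.iterate j hxy.le) (Nat.find_min h (by omega))
  · obtain ⟨i, rfl⟩ : ∃ i, j = i + Nat.find h := ⟨j - Nat.find h, by omega⟩
    rw [Function.iterate_add_apply, Function.iterate_add_apply, Nat.find_spec h]

def alphabet : Set ℕ := {0, 1, 3, 4}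

@[simp]
lemma phi_append (a b : List ℕ) : phi (a ++ b) = phi a ++ phi b := by
  simp [phi]

@[simp]
lemma phi_cons (a : ℕ) (l : List ℕ) : phi (a :: l) = phiLetter a ++ phi l := by
  simp [phi]

lemma phi_isPrefix {a b : List ℕ} (h : a <+: b) : phi a <+: phi b := by
  obtain ⟨t, rfl⟩ := h
  exact ⟨phi t, (phi_append a t).symm⟩

lemma mem_alphabet_of_mem_phiLetter {a b : ℕ} (ha : a ∈ alphabet) (hb : b ∈ phiLetter a) :
    b ∈ alphabet := by
  simp only [alphabet, Set.mem_insert_iff, Set.mem_singleton_iff] at ha ⊢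
  rcases ha with rfl | rfl | rfl | rfl <;>
    simp only [phiLetter, List.mem_cons, List.not_mem_nil, or_false] at hb <;> omega

lemma one_le_length_phiLetter {a : ℕ} (ha : a ∈ alphabet) : 1 ≤ (phiLetter a).length := by
  simp only [alphabet, Set.mem_insert_iff, Set.mem_singleton_iff] at ha
  rcases ha with rfl | rfl | rfl | rfl <;> simp [phiLetter]

lemma length_phiLetter_le_two (a : ℕ) : (phiLetter a).length ≤ 2 := by
  unfold phiLetter; split <;> simp

lemma length_le_length_phi {l : List ℕ} (hl : ∀ a ∈ l, a ∈ alphabet) :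
    l.length ≤ (phi l).length := by
  induction l with
  | nil => simp
  | cons a t ih =>
    have ha := one_le_length_phiLetter (hl a List.mem_cons_self)
    have ht := ih fun b hb => hl b (List.mem_cons_of_mem a hb)
    simp only [phi_cons, List.length_append, List.length_cons]
    omega

def phiIter (k : ℕ) : List ℕ := phi^[k] [0]

lemma phiIter_succ (k : ℕ) : phiIter (k + 1) = phi (phiIter k) :=
  Function.iterate_succ_apply' _ _ _

lemma phiIter_isPrefix_succ (k : ℕ) : phiIter k <+: phiIter (k + 1) := by
  induction k with
  | zero => exact ⟨[3], rfl⟩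
  | succ n ih => rw [phiIter_succ, phiIter_succ]; exact phi_isPrefix ih

lemma phiIter_isPrefix {k m : ℕ} (h : k ≤ m) : phiIter k <+: phiIter m := by
  induction m, h using Nat.le_induction with
  | base => exact List.prefix_refl _
  | succ m _ ih => exact ih.trans (phiIter_isPrefix_succ m)

lemma mem_alphabet_of_mem_phiIter {k a : ℕ} (ha : a ∈ phiIter k) : a ∈ alphabet := by
  induction k generalizing a with
  | zero => simp_all [phiIter, alphabet]
  | succ n ih =>
    rw [phiIter_succ, phi, List.mem_flatMap] at ha
    obtain ⟨b, hb, hab⟩ := ha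
    exact mem_alphabet_of_mem_phiLetter (ih hb) hab

lemma le_length_phiIter (k : ℕ) : k + 1 ≤ (phiIter k).length := by
  induction k with
  | zero => simp [phiIter]
  | succ n ih =>
    obtain ⟨l, hl⟩ : ∃ l, phiIter n = 0 :: l := by
      obtain ⟨l, hl⟩ := phiIter_isPrefix (Nat.zero_le n)
      exact ⟨l, hl.symm⟩
    have hlφ : l.length ≤ (phi l).length :=
      length_le_length_phi fun a ha => mem_alphabet_of_mem_phiIter (by rw [hl]; simp [ha])
    rw [hl, List.length_cons] at ih
    simp only [phiIter_succ, hl, phi_cons, List.length_append]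
    simp only [phiLetter, List.length_cons, List.length_nil]
    omega

lemma w_eq_getElem_phiIter {m n : ℕ} (h : n < (phiIter m).length) : w n = (phiIter m)[n] := by
  have hn : n < (phiIter (n + 1)).length := (le_length_phiIter (n + 1)).trans_lt' (by omega)
  change (phiIter (n + 1)).getD n 0 = _
  rw [List.getD_eq_getElem _ _ hn]
  rcases Nat.le_total (n + 1) m with hle | hle
  · exact (phiIter_isPrefix hle).getElem hn
  · exact ((phiIter_isPrefix hle).getElem h).symm

lemma w_mem_alphabet (n : ℕ) : w n ∈ alphabet := by
  have h : n < (phiIter (n + 1)).length := (le_length_phiIter (n + 1)).trans_lt' (by omega)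
  rw [w_eq_getElem_phiIter h]
  exact mem_alphabet_of_mem_phiIter (List.getElem_mem h)

lemma map_range_w_eq_take {m n : ℕ} (h : n ≤ (phiIter m).length) :
    (List.range n).map w = (phiIter m).take n := by
  refine List.ext_getElem (by simp [h]) fun i h₁ _ => ?_
  simp only [List.getElem_map, List.getElem_range, List.getElem_take]
  exact w_eq_getElem_phiIter (by simp at h₁; omega)

lemma map_range_eta (p : ℕ) : (List.range (eta p)).map w = phi ((List.range p).map w) := by
  have hp : (List.range p).map w = (phiIter p).take p :=
    map_range_w_eq_take ((le_length_phiIter p).trans' (Nat.le_succ p))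
  obtain ⟨t, ht⟩ : phi ((List.range p).map w) <+: phiIter (p + 1) := by
    rw [phiIter_succ, hp]; exact phi_isPrefix (List.take_prefix _ _)
  have hlen : eta p ≤ (phiIter (p + 1)).length := by
    rw [← ht, List.length_append]; exact Nat.le_add_right _ _
  rw [map_range_w_eq_take hlen, ← ht]
  exact List.take_left' rfl

lemma eta_succ (t : ℕ) : eta (t + 1) = eta t + (phiLetter (w t)).length := by
  simp [eta, List.range_succ, phi]

lemma w_eta_add {t i : ℕ} (hi : i < (phiLetter (w t)).length) :
    w (eta t + i) = (phiLetter (w t))[i] := by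
  have hfix : (List.range (eta (t + 1))).map w = (List.range (eta t)).map w ++ phiLetter (w t) := by
    rw [map_range_eta, map_range_eta, List.range_succ, List.map_append, phi_append]
    simp [phi]
  have hlt : eta t + i < eta (t + 1) := by rw [eta_succ]; omega
  have := congrArg (·[eta t + i]?) hfix
  simp only [List.getElem?_map, List.getElem?_range hlt] at this
  rw [List.getElem?_append_right (by simp), List.getElem?_eq_getElem (by simpa using hi)] at this
  simpa using this

lemma eta_strictMono : StrictMono eta :=
  strictMono_nat_of_lt_succ fun t => by
    have := one_le_length_phiLetter (w_mem_alphabet t)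
    rw [eta_succ]; omega

lemma eta_succ_le (t : ℕ) : eta (t + 1) ≤ eta t + 2 := by
  rw [eta_succ]; exact Nat.add_le_add_left (length_phiLetter_le_two _) _

lemma lt_eta {x : ℕ} (hx : 1 ≤ x) : x < eta x := by
  have h := eta_strictMono.add_le_nat (x - 1) 1
  have h1 : eta 1 = 2 := rfl
  rw [Nat.sub_add_cancel hx] at h
  omega

lemma eta_par_le (x : ℕ) : eta (par x) ≤ x :=
  Nat.findGreatest_spec (P := fun t => eta t ≤ x) (Nat.zero_le x) (Nat.zero_le x)

lemma lt_eta_par_succ (x : ℕ) : x < eta (par x + 1) := by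
  by_contra! h
  have hx : par x + 1 ≤ x := by
    have := eta_strictMono.id_le (par x + 1)
    simp only [id] at this
    omega
  exact Nat.findGreatest_is_greatest (P := fun t => eta t ≤ x) (Nat.lt_succ_self _) hx h

lemma par_zero : par 0 = 0 := rfl

lemma par_lt {x : ℕ} (hx : 1 ≤ x) : par x < x := by
  by_contra! h
  have := eta_strictMono.monotone h
  have := eta_par_le x
  have := lt_eta hx
  omega

lemma par_monotone : Monotone par := fun x _ h =>
  Nat.le_findGreatest ((Nat.findGreatest_le x).trans h) ((eta_par_le x).trans h)

lemma iterate_par_eq_zero {x n : ℕ} (h : x ≤ n) : par^[n] x = 0 := by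
  induction n generalizing x with
  | zero => simp_all
  | succ n ih =>
    rw [Function.iterate_succ_apply]
    apply ih
    rcases Nat.eq_zero_or_pos x with rfl | hx
    · simp [par_zero]
    · have := par_lt hx; omega

lemma eq_succ_of_par_eq_of_lt {x y : ℕ} (h : par x = par y) (hxy : x < y) : y = x + 1 := by
  have := eta_par_le x
  have := lt_eta_par_succ y
  have := eta_succ_le (par x)
  rw [← h] at *
  omega

lemma w_eq_zero_or_four_of_par_eq_par_succ {x : ℕ} (h : par x = par (x + 1)) :
    w x = 0 ∨ w x = 4 := by
  have hlo := eta_par_le x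
  have hhi := lt_eta_par_succ (x + 1)
  rw [← h] at hhi
  set t := par x
  have hlen := eta_succ t
  have hx : x = eta t + 0 := by have := eta_succ_le t; omega
  have h2 : 1 < (phiLetter (w t)).length := by omega
  rw [hx, w_eta_add (by omega)]
  have := w_mem_alphabet t
  simp only [alphabet, Set.mem_insert_iff, Set.mem_singleton_iff] at this
  rcases this with h' | h' | h' | h' <;> simp [h', phiLetter] at h2 ⊢

lemma factorW_self_succ (x : ℕ) : factorW x (x + 1) = [w x] := by
  simp [factorW]

/-- For a nonempty block `w[p,q)` with ancestral position sequences
`pᵢ = parⁱ(p)`, `qᵢ = parⁱ(q)`, there is a `k` such that `pⱼ < qⱼ` for `j ≤ k`,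
`pⱼ = qⱼ` for `j > k`, and `w[p_k, q_k)` is `[0]` or `[4]`. -/
theorem last_nonempty_ancestor (p q : ℕ) (hpq : p < q) :
    ∃ k : ℕ,
      (∀ j ≤ k, par^[j] p < par^[j] q) ∧
      (∀ j, k < j → par^[j] p = par^[j] q) ∧
      (factorW (par^[k] p) (par^[k] q) = [0] ∨ factorW (par^[k] p) (par^[k] q) = [4]) := by
  obtain ⟨k, hlt, heq⟩ := par_monotone.exists_iterate_lt_and_eq hpq
    ⟨q, by rw [iterate_par_eq_zero hpq.le, iterate_par_eq_zero le_rfl]⟩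
  refine ⟨k, hlt, heq, ?_⟩
  have hpar : par (par^[k] p) = par (par^[k] q) := by
    simpa only [Function.iterate_succ_apply'] using heq (k + 1) k.lt_succ_self
  have hq := eq_succ_of_par_eq_of_lt hpar (hlt k le_rfl)
  rw [hq] at hpar ⊢
  simpa [factorW_self_succ] using w_eq_zero_or_four_of_par_eq_par_succ hpar
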